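/- Let W = (U, v, v+1, V', j, V'') be a legal schedule in which (v, v+1) is the canonical (last) increase, at positions h-1, h, and suppose the first bar splitting this pair is x_{h+j} of length j (i.e., h+j - w_{h+j} = h). Then Q_{U,v,v+1,V',j+1,V''} - (1+q) Q_{U,v,v+1,V',j,V''} + q Q_{U,v,v+1,V',j-1,V''} = 0. -/

import Mathlib

open Polynomial Finset

noncomputable section

abbrev K : Type := RatFunc ℚ

def qq : K := RatFunc.X

def qint (q : K) (n : ℕ) : K := ∑ i ∈ Finset.range n, q ^ i

def Legal (W : List ℕ) : Prop :=
  (∀ h : W ≠ [], 1 ≤ W.head h ∧ W.head h ≤ 2) ∧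
    List.Chain' (fun a b => 1 ≤ b ∧ b ≤ a + 1) W

def Prev (q : K) : List ℕ → MvPolynomial ℤ K
  | [] => MvPolynomial.C q * MvPolynomial.X (-1) + MvPolynomial.X 0
  | w :: V =>
      MvPolynomial.C ((1 - q)⁻¹) *
        ((MvPolynomial.X ((V.length : ℤ) + 1) - MvPolynomial.C (q ^ w)) * Prev q V +
          (1 - MvPolynomial.X ((V.length : ℤ) + 1)) *
            MvPolynomial.aeval
              (fun j : ℤ =>
                if (V.length : ℤ) + 1 - (w : ℤ) ≤ j ∧ j ≤ (V.length : ℤ) then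
                  MvPolynomial.C q * MvPolynomial.X j
                else MvPolynomial.X j)
              (Prev q V))

def Psched (q : K) (W : List ℕ) : MvPolynomial ℤ K := Prev q W.reverse

def Qsched (q : K) (W : List ℕ) : Polynomial K :=
  MvPolynomial.aeval (fun _ : ℤ => (Polynomial.X : Polynomial K)) (Psched q W)

def TameFE (q : K) (W : List ℕ) : Prop :=
  ∀ x : K, x ≠ 0 →
    (1 - q / x) * (Qsched q W).eval x +
        x ^ (W.length + 1) * (1 - q * x) * (Qsched q W).eval x⁻¹ =
      (1 + x ^ (W.length + 1)) * ((1 - q ^ 2) * (W.map (qint q)).prod)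

/-!
Building `Psched` bar by bar, the bar of length `w` at (0-based) position `m` sends `P` to
`((X (m + 1) - q ^ w) P + (1 - X (m + 1)) σ P) / (1 - q)`, where `σ` multiplies the variables
`X i`, `m + 1 - w ≤ i ≤ m`, by `q`. With `h = |U| + 2`, a bar after the increase at `h - 1, h`
splits it exactly when `m + 1 - w = h`, i.e. when `σ` rescales `X h` but not `X (h - 1)`; every
other such bar rescales both variables or neither.

Right after the increase `(v, v + 1)` the polynomial has the form
`A + B (q X (h - 1) + X h) + D X (h - 1) X h` with `A`, `B`, `D` free of `X (h - 1)` and `X h`,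
and non-splitting bars preserve this form. At the splitting bar the lengths `j + 1`, `j`, `j - 1`
rescale both variables, only `X h`, and neither. In `P_{j+1} - (1 + q) P_j + q P_{j-1}` the terms
without `σ` cancel, and so do the `A` and `D` parts, leaving a multiple of `X (h - 1) - X h`.
Since the increase is the last one, the later bars are too short to split it, so this
divisibility persists up to the full schedule; setting every variable to `X` kills the combination.
-/

namespace MvPolynomial

theorem aeval_mem_supported {σ τ R : Type*} [CommSemiring R] {s : Set σ} {t : Set τ}
    {f : σ → MvPolynomial τ R} (hf : ∀ i ∈ s, f i ∈ supported R t) {p : MvPolynomial σ R}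
    (hp : p ∈ supported R s) : aeval f p ∈ supported R t := by
  have hmap : (supported R s).map (aeval f) ≤ supported R t := by
    rw [supported_eq_adjoin_X, AlgHom.map_adjoin, Algebra.adjoin_le_iff]
    rintro _ ⟨_, ⟨i, hi, rfl⟩, rfl⟩
    simpa using hf i hi
  exact hmap ⟨p, hp, rfl⟩

theorem aeval_eq_of_eqOn {σ R A : Type*} [CommSemiring R] [CommSemiring A] [Algebra R A]
    {s : Set σ} {f g : σ → A} (hfg : Set.EqOn f g s) {p : MvPolynomial σ R}
    (hp : p ∈ supported R s) : aeval f p = aeval g p := by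
  refine (AlgHom.eqOn_adjoin_iff.2 ?_) hp
  rintro _ ⟨i, hi, rfl⟩
  simpa using hfg hi

theorem C_mem_supported {σ R : Type*} [CommSemiring R] (s : Set σ) (c : R) :
    C c ∈ supported R s :=
  (supported R s).algebraMap_mem c

end MvPolynomial

namespace Schedule

open MvPolynomial (supported supported_mono X_mem_supported C_mem_supported aeval_mem_supported
  aeval_eq_of_eqOn)
open MvPolynomial renaming C → Cm, X → Xm

def rescale (q : K) (lo hi : ℤ) : MvPolynomial ℤ K →ₐ[K] MvPolynomial ℤ K :=
  MvPolynomial.aeval fun i => if lo ≤ i ∧ i ≤ hi then Cm q * Xm i else Xm i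

def step (q : K) (x m : ℕ) (P : MvPolynomial ℤ K) : MvPolynomial ℤ K :=
  Cm (1 - q)⁻¹ * ((Xm ((m : ℤ) + 1) - Cm (q ^ x)) * P +
    (1 - Xm ((m : ℤ) + 1)) * rescale q ((m : ℤ) + 1 - x) m P)

theorem prev_cons (q : K) (x : ℕ) (L : List ℕ) :
    Prev q (x :: L) = step q x L.length (Prev q L) := rfl

theorem psched_append_singleton (q : K) (W : List ℕ) (x : ℕ) :
    Psched q (W ++ [x]) = step q x W.length (Psched q W) := by
  simp [Psched, prev_cons]

section rescale

variable {q : K} {lo hi i : ℤ}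

theorem rescale_X_of_mem (hi' : lo ≤ i ∧ i ≤ hi) : rescale q lo hi (Xm i) = Cm q * Xm i := by
  simp [rescale, hi']

theorem rescale_X_of_not_mem (hi' : ¬(lo ≤ i ∧ i ≤ hi)) : rescale q lo hi (Xm i) = Xm i := by
  simp [rescale, hi']

theorem rescale_C (c : K) : rescale q lo hi (Cm c) = Cm c := by
  simp [rescale, MvPolynomial.algebraMap_eq]

theorem rescale_mem_supported {s : Set ℤ} {P : MvPolynomial ℤ K} (hP : P ∈ supported K s) :
    rescale q lo hi P ∈ supported K s := by
  refine aeval_mem_supported (fun i hi' => ?_) hP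
  split_ifs
  · exact mul_mem (C_mem_supported s q) (X_mem_supported.2 hi')
  · exact X_mem_supported.2 hi'

theorem rescale_eq_rescale {lo' hi' : ℤ} {s : Set ℤ} {P : MvPolynomial ℤ K}
    (hs : ∀ i ∈ s, (lo ≤ i ∧ i ≤ hi ↔ lo' ≤ i ∧ i ≤ hi')) (hP : P ∈ supported K s) :
    rescale q lo hi P = rescale q lo' hi' P :=
  aeval_eq_of_eqOn (fun i hi => by simp only [hs i hi]) hP

theorem exists_rescale_X_pair {h : ℤ} (hh : h ≤ hi) (hlo : lo ≠ h) :
    ∃ c : K, rescale q lo hi (Xm (h - 1)) = Cm c * Xm (h - 1) ∧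
      rescale q lo hi (Xm h) = Cm c * Xm h := by
  rcases lt_or_gt_of_ne hlo with hlt | hgt
  · exact ⟨q, rescale_X_of_mem ⟨by omega, by omega⟩, rescale_X_of_mem ⟨by omega, by omega⟩⟩
  · refine ⟨1, ?_, ?_⟩ <;> rw [rescale_X_of_not_mem (by omega), map_one, one_mul]

end rescale

def offPair (h : ℤ) : Set ℤ := {h - 1, h}ᶜ

theorem X_mem_supported_offPair {h i : ℤ} (h₁ : i ≠ h - 1) (h₂ : i ≠ h) :
    (Xm i : MvPolynomial ℤ K) ∈ supported K (offPair h) :=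
  X_mem_supported.2 (by simp [offPair, h₁, h₂])

def IsBalanced (q : K) (h : ℤ) (P : MvPolynomial ℤ K) : Prop :=
  ∃ A ∈ supported K (offPair h), ∃ B ∈ supported K (offPair h),
    ∃ D ∈ supported K (offPair h),
      P = A + B * (Cm q * Xm (h - 1) + Xm h) + D * (Xm (h - 1) * Xm h)

namespace IsBalanced

variable {q : K} {h : ℤ} {P Q : MvPolynomial ℤ K}

theorem add (hP : IsBalanced q h P) (hQ : IsBalanced q h Q) : IsBalanced q h (P + Q) := by
  obtain ⟨A, hA, B, hB, D, hD, rfl⟩ := hP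
  obtain ⟨A', hA', B', hB', D', hD', rfl⟩ := hQ
  exact ⟨A + A', add_mem hA hA', B + B', add_mem hB hB', D + D', add_mem hD hD', by ring⟩

theorem mul_left {E : MvPolynomial ℤ K} (hE : E ∈ supported K (offPair h))
    (hP : IsBalanced q h P) : IsBalanced q h (E * P) := by
  obtain ⟨A, hA, B, hB, D, hD, rfl⟩ := hP
  exact ⟨E * A, mul_mem hE hA, E * B, mul_mem hE hB, E * D, mul_mem hE hD, by ring⟩

theorem map_rescale {lo hi : ℤ} (hh : h ≤ hi) (hlo : lo ≠ h) (hP : IsBalanced q h P) :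
    IsBalanced q h (rescale q lo hi P) := by
  obtain ⟨c, hc₁, hc₂⟩ := exists_rescale_X_pair (q := q) hh hlo
  obtain ⟨A, hA, B, hB, D, hD, rfl⟩ := hP
  have hc := C_mem_supported (R := K) (offPair h) c
  refine ⟨Schedule.rescale q lo hi A, rescale_mem_supported hA,
    Cm c * Schedule.rescale q lo hi B, mul_mem hc (rescale_mem_supported hB),
    Cm c * Cm c * Schedule.rescale q lo hi D, mul_mem (mul_mem hc hc) (rescale_mem_supported hD),
    ?_⟩
  simp only [map_add, map_mul, hc₁, hc₂, rescale_C]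
  ring

theorem map_step {x m : ℕ} (hh : h ≤ m) (hx : (m : ℤ) + 1 - x ≠ h) (hP : IsBalanced q h P) :
    IsBalanced q h (step q x m P) := by
  have hX : Xm ((m : ℤ) + 1) ∈ supported K (offPair h) :=
    X_mem_supported_offPair (by omega) (by omega)
  exact (((hP.mul_left (sub_mem hX (C_mem_supported _ _))).add
    ((hP.map_rescale (by omega) hx).mul_left (sub_mem (one_mem _) hX))).mul_left
    (C_mem_supported _ _))

end IsBalanced

def qSecondDiff (q : K) (P₁ P₂ P₃ : MvPolynomial ℤ K) : MvPolynomial ℤ K :=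
  P₁ - Cm (1 + q) * P₂ + Cm q * P₃

theorem step_qSecondDiff (q : K) (x m : ℕ) (P₁ P₂ P₃ : MvPolynomial ℤ K) :
    qSecondDiff q (step q x m P₁) (step q x m P₂) (step q x m P₃) =
      step q x m (qSecondDiff q P₁ P₂ P₃) := by
  simp only [qSecondDiff, step, map_add, map_sub, map_mul, rescale_C]
  ring

theorem dvd_step {q : K} {h : ℤ} {x m : ℕ} {P : MvPolynomial ℤ K} (hh : h ≤ m)
    (hx : (m : ℤ) + 1 - x ≠ h) (hP : Xm (h - 1) - Xm h ∣ P) :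
    Xm (h - 1) - Xm h ∣ step q x m P := by
  obtain ⟨c, hc₁, hc₂⟩ := exists_rescale_X_pair (q := q) (by omega : h ≤ (m : ℤ)) hx
  have hσ : Xm (h - 1) - Xm h ∣ rescale q ((m : ℤ) + 1 - x) m P := by
    refine dvd_trans ⟨Cm c, ?_⟩ (map_dvd _ hP)
    rw [map_sub, hc₁, hc₂]
    ring
  exact ((hP.mul_left _).add (hσ.mul_left _)).mul_left _

theorem IsBalanced.dvd_qSecondDiff_step {q : K} {h : ℤ} {j m : ℕ} {P : MvPolynomial ℤ K}
    (hm : (m : ℤ) = h + j) (hP : IsBalanced q h P) :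
    Xm (h - 1) - Xm h ∣
      qSecondDiff q (step q (j + 2) m P) (step q (j + 1) m P) (step q j m P) := by
  obtain ⟨A, hA, B, hB, D, hD, rfl⟩ := hP
  simp only [qSecondDiff, step]
  rw [show (m : ℤ) + 1 - ((j + 2 : ℕ) : ℤ) = h - 1 by push_cast; omega,
    show (m : ℤ) + 1 - ((j + 1 : ℕ) : ℤ) = h by push_cast; omega,
    show (m : ℤ) + 1 - (j : ℤ) = h + 1 by omega]
  have hoff : ∀ {lo}, h - 1 ≤ lo → lo ≤ h → ∀ E ∈ supported K (offPair h),
      rescale q lo m E = rescale q (h + 1) m E := fun h₁ h₂ E hE =>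
    rescale_eq_rescale (fun i hi => by simp [offPair] at hi; omega) hE
  simp only [map_add, map_mul, rescale_C,
    hoff (lo := h - 1) le_rfl (by omega) _ hA, hoff (lo := h) (by omega) le_rfl _ hA,
    hoff (lo := h - 1) le_rfl (by omega) _ hB, hoff (lo := h) (by omega) le_rfl _ hB,
    hoff (lo := h - 1) le_rfl (by omega) _ hD, hoff (lo := h) (by omega) le_rfl _ hD,
    rescale_X_of_mem (show h - 1 ≤ h - 1 ∧ h - 1 ≤ m by omega),
    rescale_X_of_mem (show h - 1 ≤ h ∧ h ≤ m by omega),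
    rescale_X_of_not_mem (show ¬(h ≤ h - 1 ∧ h - 1 ≤ m) by omega),
    rescale_X_of_mem (show h ≤ h ∧ h ≤ m by omega),
    rescale_X_of_not_mem (show ¬(h + 1 ≤ h - 1 ∧ h - 1 ≤ (m : ℤ)) by omega),
    rescale_X_of_not_mem (show ¬(h + 1 ≤ h ∧ h ≤ (m : ℤ)) by omega)]
  exact ⟨Cm (1 - q)⁻¹ * Cm (q * q - q) * (1 - Xm ((m : ℤ) + 1)) * rescale q (h + 1) m B, by
    simp only [map_sub, map_mul, map_pow, map_one]; ring⟩

theorem prev_mem_supported (q : K) (L : List ℕ) :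
    Prev q L ∈ supported K (Set.Icc (-1 : ℤ) L.length) := by
  have hX : ∀ {i n : ℤ}, -1 ≤ i → i ≤ n →
      (Xm i : MvPolynomial ℤ K) ∈ supported K (Set.Icc (-1) n) :=
    fun h₁ h₂ => X_mem_supported.2 ⟨h₁, h₂⟩
  induction L with
  | nil =>
    exact add_mem (mul_mem (C_mem_supported _ q) (hX le_rfl (by omega))) (hX (by omega) le_rfl)
  | cons x L ih =>
    have hL := supported_mono (R := K)
      (Set.Icc_subset_Icc_right (by simp : (L.length : ℤ) ≤ (x :: L).length)) ih
    rw [prev_cons]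
    exact mul_mem (C_mem_supported _ _) (add_mem
      (mul_mem (sub_mem (hX (by omega) (by simp)) (C_mem_supported _ _)) hL)
      (mul_mem (sub_mem (one_mem _) (hX (by omega) (by simp))) (rescale_mem_supported hL)))

theorem isBalanced_psched_pair (q : K) (U : List ℕ) (v : ℕ) :
    IsBalanced q (U.length + 2) (Psched q (U ++ [v, v + 1])) := by
  set h : ℤ := U.length + 2
  have hP₀ : Psched q U ∈ supported K (Set.Icc (-1 : ℤ) U.length) :=
    U.length_reverse ▸ prev_mem_supported q U.reverse
  rw [show U ++ [v, v + 1] = U ++ [v] ++ [v + 1] by simp, psched_append_singleton,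
    psched_append_singleton]
  simp only [step, List.length_append, List.length_singleton]
  rw [show ((U.length + 1 : ℕ) : ℤ) + 1 = h by push_cast; ring,
    show (U.length : ℤ) + 1 = h - 1 by ring]
  set P₀ := Psched q U
  set σ := rescale q (h - 1 - v) U.length
  set σ' := rescale q (h - ((v + 1 : ℕ) : ℤ)) (U.length + 1 : ℕ)
  have hσ'P₀ : σ' P₀ = σ P₀ :=
    rescale_eq_rescale (fun i hi => by simp [h] at hi ⊢; omega) hP₀
  have hσ'C : ∀ c, σ' (Cm c) = Cm c := fun c => rescale_C c
  have hσ'X : σ' (Xm (h - 1)) = Cm q * Xm (h - 1) :=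
    rescale_X_of_mem (by simp [h]; omega)
  have hA₀ : P₀ ∈ supported K (offPair h) :=
    supported_mono (fun i hi => by simp [offPair, h] at hi ⊢; omega) hP₀
  have hA₁ : σ P₀ ∈ supported K (offPair h) := rescale_mem_supported hA₀
  have hA₂ : σ' (σ P₀) ∈ supported K (offPair h) := rescale_mem_supported hA₁
  have hC := C_mem_supported (R := K) (offPair h)
  set u := (1 - q)⁻¹
  refine ⟨Cm u * Cm u *
      (Cm q * (Cm (q ^ v) * (Cm (q ^ v) * P₀ - σ P₀)) + (σ' (σ P₀) - Cm (q ^ v) * σ P₀)),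
    mul_mem (mul_mem (hC _) (hC _)) (add_mem (mul_mem (hC _) (mul_mem (hC _)
      (sub_mem (mul_mem (hC _) hA₀) hA₁))) (sub_mem hA₂ (mul_mem (hC _) hA₁))),
    Cm u * Cm u * ((σ P₀ - Cm (q ^ v) * P₀) - (σ' (σ P₀) - Cm (q ^ v) * σ P₀)),
    mul_mem (mul_mem (hC _) (hC _)) (sub_mem (sub_mem hA₁ (mul_mem (hC _) hA₀))
      (sub_mem hA₂ (mul_mem (hC _) hA₁))),
    Cm u * Cm u * ((P₀ - σ P₀) - Cm q * (σ P₀ - σ' (σ P₀))),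
    mul_mem (mul_mem (hC _) (hC _)) (sub_mem (sub_mem hA₀ hA₁)
      (mul_mem (hC _) (sub_mem hA₁ hA₂))), ?_⟩
  simp only [map_add, map_sub, map_mul, map_one, hσ'C, hσ'P₀, hσ'X, map_pow]
  ring

theorem IsBalanced.psched_append {q : K} {h : ℤ} {W : List ℕ} (M : List ℕ)
    (hh : h ≤ W.length)
    (hM : ∀ i < M.length, ((W.length + i : ℕ) : ℤ) + 1 - M.getD i 0 ≠ h)
    (hW : IsBalanced q h (Psched q W)) : IsBalanced q h (Psched q (W ++ M)) := by
  induction M generalizing W with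
  | nil => simpa using hW
  | cons x M ih =>
    rw [← List.singleton_append, ← List.append_assoc]
    refine ih (by simp; omega) (fun i hi => ?_) ?_
    · simpa [Nat.add_assoc, Nat.add_comm 1] using hM (i + 1) (by simp; omega)
    · rw [psched_append_singleton]
      exact hW.map_step (by omega) (by simpa using hM 0 (by simp))

theorem dvd_qSecondDiff_psched_append {q : K} {h : ℤ} {W₁ W₂ W₃ : List ℕ} (M : List ℕ)
    (h₂ : W₂.length = W₁.length) (h₃ : W₃.length = W₁.length) (hh : h ≤ W₁.length)
    (hM : ∀ i < M.length, ((W₁.length + i : ℕ) : ℤ) + 1 - M.getD i 0 ≠ h)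
    (hW : Xm (h - 1) - Xm h ∣ qSecondDiff q (Psched q W₁) (Psched q W₂) (Psched q W₃)) :
    Xm (h - 1) - Xm h ∣
      qSecondDiff q (Psched q (W₁ ++ M)) (Psched q (W₂ ++ M)) (Psched q (W₃ ++ M)) := by
  induction M generalizing W₁ W₂ W₃ with
  | nil => simpa using hW
  | cons x M ih =>
    simp only [← List.singleton_append (l := M), ← List.append_assoc]
    refine ih (by simp [h₂]) (by simp [h₃]) (by simp; omega) (fun i hi => ?_) ?_
    · simpa [Nat.add_assoc, Nat.add_comm 1] using hM (i + 1) (by simp; omega)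
    · rw [psched_append_singleton, psched_append_singleton, psched_append_singleton, h₂, h₃,
        step_qSecondDiff]
      exact dvd_step (by omega) (by simpa using hM 0 (by simp)) hW

theorem qsched_relation_of_dvd {q : K} {h : ℤ} {W₁ W₂ W₃ : List ℕ}
    (hW : Xm (h - 1) - Xm h ∣ qSecondDiff q (Psched q W₁) (Psched q W₂) (Psched q W₃)) :
    Qsched q W₁ - Polynomial.C (1 + q) * Qsched q W₂ + Polynomial.C q * Qsched q W₃ = 0 := by
  have h₀ := map_dvd (MvPolynomial.aeval fun _ : ℤ => (Polynomial.X : K[X])) hW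
  simp only [map_sub, MvPolynomial.aeval_X, sub_self, zero_dvd_iff] at h₀
  simpa [qSecondDiff, Qsched, Polynomial.algebraMap_eq] using h₀

theorem qsched_relation_at_first_split (q : K) (U V' V'' : List ℕ) (v : ℕ)
    (hV' : ∀ i < V'.length, V'.getD i 0 ≠ i + 1)
    (hV'' : ∀ i < V''.length, V''.getD i 0 ≤ V'.length + 1) :
    Qsched q (U ++ [v, v + 1] ++ V' ++ [V'.length + 2] ++ V'') -
        Polynomial.C (1 + q) * Qsched q (U ++ [v, v + 1] ++ V' ++ [V'.length + 1] ++ V'') +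
          Polynomial.C q * Qsched q (U ++ [v, v + 1] ++ V' ++ [V'.length] ++ V'') = 0 := by
  have hlen : (U ++ [v, v + 1]).length = U.length + 2 := by simp
  refine qsched_relation_of_dvd (h := U.length + 2) (dvd_qSecondDiff_psched_append V''
    (by simp) (by simp) (by simp; omega) (fun i hi => ?_) ?_)
  · have := hV'' i hi
    simp only [List.length_append, List.length_singleton, hlen]
    push_cast
    omega
  · rw [psched_append_singleton, psched_append_singleton, psched_append_singleton]
    refine IsBalanced.dvd_qSecondDiff_step (by simp; omega) <|
      (isBalanced_psched_pair q U v).psched_append V' (by simp) fun i hi => ?_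
    have := hV' i hi
    rw [hlen]
    push_cast
    omega

end Schedule

theorem Legal.getD_succ_le {W : List ℕ} (hW : Legal W) {i : ℕ} (hi : i + 1 < W.length) :
    W.getD (i + 1) 0 ≤ W.getD i 0 + 1 := by
  rw [List.getD_eq_getElem _ _ hi, List.getD_eq_getElem _ _ (by omega)]
  exact (List.isChain_iff_getElem.1 hW.2 i hi).2

theorem Legal.getD_le_getD_of_no_increase {W : List ℕ} (hW : Legal W) {a : ℕ}
    (hno : ∀ i, a ≤ i → i + 1 < W.length → W.getD (i + 1) 0 ≠ W.getD i 0 + 1)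
    {b : ℕ} (hab : a ≤ b) (hb : b < W.length) : W.getD b 0 ≤ W.getD a 0 := by
  induction b, hab using Nat.le_induction with
  | base => exact le_rfl
  | succ b hab ih =>
    have hle := hW.getD_succ_le hb
    have hne := hno b hab hb
    exact (show W.getD (b + 1) 0 ≤ W.getD b 0 by omega).trans (ih (by omega))

open Schedule in
/-- Proposition 3.4, identity 3.9: with (v,v+1) the canonical
increase of W = (U,v,v+1,V',j,V'') at positions h-1,h, split first by the bar of
length j at position h+j, one has
Q_{U,v,v+1,V',j+1,V''} - (1+q) Q_{U,v,v+1,V',j,V''} + q Q_{U,v,v+1,V',j-1,V''} = 0. -/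
theorem stmt14 (U V' V'' : List ℕ) (v j : ℕ)
    (hW : Legal (U ++ v :: (v + 1) :: (V' ++ j :: V'')))
    -- the bar at position h + j (h = U.length + 2) has length j, i.e. it splits (v, v+1)
    (hpos : V'.length + 1 = j)
    -- (v, v+1) is the canonical (last) increase of W
    (hcanon : ∀ i : ℕ, U.length + 1 ≤ i →
      i + 1 < (U ++ v :: (v + 1) :: (V' ++ j :: V'')).length →
      (U ++ v :: (v + 1) :: (V' ++ j :: V'')).getD (i + 1) 0 ≠
        (U ++ v :: (v + 1) :: (V' ++ j :: V'')).getD i 0 + 1)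
    -- no earlier bar splits the pair (v, v+1)
    (hfirst : ∀ r : ℕ, r < (U ++ v :: (v + 1) :: (V' ++ j :: V'')).length →
      ((r : ℤ) + 1) < (U.length : ℤ) + 2 + (j : ℤ) →
      ((r : ℤ) + 1) - ((U ++ v :: (v + 1) :: (V' ++ j :: V'')).getD r 0 : ℤ) ≠
        (U.length : ℤ) + 2) :
    Qsched qq (U ++ v :: (v + 1) :: (V' ++ (j + 1) :: V'')) -
        Polynomial.C (1 + qq) * Qsched qq (U ++ v :: (v + 1) :: (V' ++ j :: V'')) +
          Polynomial.C qq * Qsched qq (U ++ v :: (v + 1) :: (V' ++ (j - 1) :: V'')) = 0 := by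
  subst hpos
  have hsplit : ∀ x, U ++ v :: (v + 1) :: (V' ++ x :: V'') =
      U ++ [v, v + 1] ++ V' ++ [x] ++ V'' := by simp
  rw [hsplit, hsplit, hsplit, Nat.add_sub_cancel]
  set W := U ++ v :: (v + 1) :: (V' ++ (V'.length + 1) :: V'')
  have hW' : ∀ i, W.getD (U.length + 2 + i) 0 = (V' ++ (V'.length + 1) :: V'').getD i 0 := by
    intro i
    rw [List.getD_append_right _ _ _ _ (by omega),
      show U.length + 2 + i - U.length = i + 1 + 1 by omega, List.getD_cons_succ,
      List.getD_cons_succ]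
  have hlen : W.length = U.length + 2 + V'.length + 1 + V''.length := by simp [W]; omega
  refine qsched_relation_at_first_split qq U V' V'' v (fun i hi => ?_) (fun i hi => ?_)
  · have := hfirst (U.length + 2 + i) (by omega) (by push_cast; omega)
    rw [hW', List.getD_append _ _ _ _ hi] at this
    push_cast at this
    omega
  · have := hW.getD_le_getD_of_no_increase (a := U.length + 2 + V'.length)
      (fun k hk => hcanon k (by omega)) (b := U.length + 2 + (V'.length + 1 + i)) (by omega)
      (by omega)
    rwa [hW', hW', List.getD_append_right _ _ _ _ le_rfl, Nat.sub_self, List.getD_cons_zero,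
      List.getD_append_right _ _ _ _ (by omega),
      show V'.length + 1 + i - V'.length = i + 1 by omega, List.getD_cons_succ] at this

end
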